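/- For density matrices ρ₀ and ρ₁ on a finite-dimensional Hilbert space, the trace distance satisfies T(ρ₀,ρ₁) = Tr(Π₀ρ₀) − Tr(Π₀ρ₁), where Π₀ := I/2 + (1/2)·sgn((ρ₀−ρ₁)/2) and sgn is applied via the spectral decomposition of the Hermitian matrix (ρ₀−ρ₁)/2. -/

import Mathlib

open Matrix ComplexOrder
open scoped Matrix.Norms.L2Operator Kronecker

noncomputable section

/-- The square root of a positive semidefinite matrix, as `Matrix.PosSemidef.sqrt` was defined
in Mathlib (Dec 2024); removed from current Mathlib. -/
def Matrix.PosSemidef.sqrt {n : Type*} [Fintype n] [DecidableEq n] {𝕜 : Type*} [RCLike 𝕜]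
    {A : Matrix n n 𝕜} (hA : A.PosSemidef) : Matrix n n 𝕜 :=
  hA.1.eigenvectorUnitary.1 * diagonal ((↑) ∘ Real.sqrt ∘ hA.1.eigenvalues) *
  (star hA.1.eigenvectorUnitary : Matrix n n 𝕜)

variable {m : Type*} [Fintype m] [DecidableEq m]

/-- A density matrix: positive semidefinite with unit trace. -/
def IsDensity (ρ : Matrix m m ℂ) : Prop := ρ.PosSemidef ∧ ρ.trace = 1

/-- The trace norm `‖A‖₁ = Tr √(AᴴA)`. -/
def traceNorm (A : Matrix m m ℂ) : ℝ :=
  ((Matrix.posSemidef_conjTranspose_mul_self A).sqrt).trace.re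

/-- The trace distance `T(ρ,σ) = ‖ρ − σ‖₁ / 2`. -/
def traceDist (ρ σ : Matrix m m ℂ) : ℝ := traceNorm (ρ - σ) / 2

/-- The fidelity `F(ρ,σ) = ‖√ρ √σ‖₁`. -/
def fid {ρ σ : Matrix m m ℂ} (hρ : ρ.PosSemidef) (hσ : σ.PosSemidef) : ℝ :=
  traceNorm (hρ.sqrt * hσ.sqrt)

/-- The sign function applied to a Hermitian matrix via its spectral decomposition. -/
def signMat {A : Matrix m m ℂ} (hA : A.IsHermitian) : Matrix m m ℂ :=
  hA.cfc (fun x => Real.sign x)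

/-- The outer product `|ψ⟩⟨φ|`. -/
def outer (ψ φ : m → ℂ) : Matrix m m ℂ := Matrix.vecMulVec ψ (star φ)

variable {α β : Type*} [Fintype α] [DecidableEq α] [Fintype β] [DecidableEq β]

/-- Partial trace over the first (A) factor. -/
def ptraceA (M : Matrix (α × β) (α × β) ℂ) : Matrix β β ℂ :=
  Matrix.of fun r r' => ∑ a, M (a, r) (a, r')

/-- Partial trace over the second (R) factor. -/
def ptraceR (M : Matrix (α × β) (α × β) ℂ) : Matrix α α ℂ :=
  Matrix.of fun a a' => ∑ r, M (a, r) (a', r)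

lemma aux_real_sign_mul_self (r : ℝ) : Real.sign r * r = |r| := by
  rcases lt_trichotomy r 0 with h | h | h
  · rw [Real.sign_of_neg h, abs_of_neg h]; ring
  · simp [h]
  · rw [Real.sign_of_pos h, abs_of_pos h]; ring

/-- product of two conjugated diagonals -/
lemma aux_prod {H : Matrix m m ℂ} (hH : H.IsHermitian) (f g : m → ℂ) :
    ((hH.eigenvectorUnitary : Matrix m m ℂ) * diagonal f
        * star (hH.eigenvectorUnitary : Matrix m m ℂ))
      * ((hH.eigenvectorUnitary : Matrix m m ℂ) * diagonal g
        * star (hH.eigenvectorUnitary : Matrix m m ℂ))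
    = (hH.eigenvectorUnitary : Matrix m m ℂ) * diagonal (f * g)
        * star (hH.eigenvectorUnitary : Matrix m m ℂ) := by
  have hU : star (hH.eigenvectorUnitary : Matrix m m ℂ) * hH.eigenvectorUnitary = 1 :=
    (Matrix.mem_unitaryGroup_iff').mp hH.eigenvectorUnitary.2
  rw [show ∀ (A B C D E F : Matrix m m ℂ), (A*B*C)*(D*E*F) = A*(B*((C*D)*E))*F by
      intros; simp only [Matrix.mul_assoc],
    hU, one_mul, diagonal_mul_diagonal]
  rfl

lemma aux_signMat_mul {H : Matrix m m ℂ} (hH : H.IsHermitian) :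
    signMat hH * H = hH.cfc (fun x => |x|) := by
  have h1 : signMat hH * H
      = ((hH.eigenvectorUnitary : Matrix m m ℂ)
          * diagonal (RCLike.ofReal ∘ (fun x => Real.sign x) ∘ hH.eigenvalues)
          * star (hH.eigenvectorUnitary : Matrix m m ℂ))
        * ((hH.eigenvectorUnitary : Matrix m m ℂ) * diagonal (RCLike.ofReal ∘ hH.eigenvalues)
          * star (hH.eigenvectorUnitary : Matrix m m ℂ)) :=
    congrArg₂ (· * ·) rfl hH.spectral_theorem
  have h2 : (RCLike.ofReal ∘ (fun x => Real.sign x) ∘ hH.eigenvalues : m → ℂ)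
      * (RCLike.ofReal ∘ hH.eigenvalues) = RCLike.ofReal ∘ (fun x => |x|) ∘ hH.eigenvalues := by
    funext i
    simp [Function.comp, ← Complex.ofReal_mul, aux_real_sign_mul_self]
  rw [h1, aux_prod, h2, Matrix.IsHermitian.cfc, Unitary.conjStarAlgAut_apply]

lemma aux_trace_cfc {H : Matrix m m ℂ} (hH : H.IsHermitian) (f : ℝ → ℝ) :
    (hH.cfc f).trace = ∑ i, (f (hH.eigenvalues i) : ℂ) := by
  have hU : star (hH.eigenvectorUnitary : Matrix m m ℂ) * hH.eigenvectorUnitary = 1 :=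
    (Matrix.mem_unitaryGroup_iff').mp hH.eigenvectorUnitary.2
  rw [Matrix.IsHermitian.cfc, Unitary.conjStarAlgAut_apply, Matrix.trace_mul_cycle, hU, one_mul, trace_diagonal]
  rfl

open MatrixOrder in
lemma aux_eq_sqrt {A B : Matrix m m ℂ} (hB : B.PosSemidef) (hA : A.PosSemidef)
    (h : B ^ 2 = A) : B = hA.sqrt := by
  have e : hA.sqrt = CFC.sqrt A := by
    rw [CFC.sqrt_eq_real_sqrt A (Matrix.nonneg_iff_posSemidef.mpr hA), cfcₙ_eq_cfc,
      Matrix.IsHermitian.cfc_eq hA.1]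
    simp [Matrix.IsHermitian.cfc, Matrix.PosSemidef.sqrt]
  rw [e]
  exact (CFC.sqrt_unique (by rw [← pow_two]; exact h) (Matrix.nonneg_iff_posSemidef.mpr hB)).symm

lemma aux_sqrt {H : Matrix m m ℂ} (hH : H.IsHermitian) {A : Matrix m m ℂ}
    (hA : A = (2 : ℂ) • H) :
    (Matrix.posSemidef_conjTranspose_mul_self A).sqrt
      = hH.cfc (fun x => 2 * |x|) := by
  set U := (hH.eigenvectorUnitary : Matrix m m ℂ) with hUdef
  have hB : (hH.cfc (fun x => 2 * |x|)).PosSemidef := by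
    rw [Matrix.IsHermitian.cfc, Unitary.conjStarAlgAut_apply]
    have hD : (diagonal (RCLike.ofReal ∘ (fun x => 2 * |x|) ∘ hH.eigenvalues)
        : Matrix m m ℂ).PosSemidef := by
      rw [posSemidef_diagonal_iff]
      intro i
      have : (0:ℝ) ≤ 2 * |hH.eigenvalues i| := by positivity
      simpa [Function.comp] using (by have h := Complex.zero_le_real.mpr this; push_cast at h; exact h : (0:ℂ) ≤ _)
    simpa [Matrix.star_eq_conjTranspose, Matrix.mul_assoc] using
      hD.mul_mul_conjTranspose_same U
  symm
  apply aux_eq_sqrt hB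
  -- candidate squared
  have hsq : (hH.cfc (fun x => 2 * |x|)) ^ 2
      = U * diagonal ((RCLike.ofReal ∘ (fun x => 2 * |x|) ∘ hH.eigenvalues)
          * (RCLike.ofReal ∘ (fun x => 2 * |x|) ∘ hH.eigenvalues)) * star U := by
    rw [pow_two, Matrix.IsHermitian.cfc, Unitary.conjStarAlgAut_apply, aux_prod]
  -- A as conjugated diagonal
  have hAd : A = U * diagonal ((2:ℂ) • (RCLike.ofReal ∘ hH.eigenvalues)) * star U := by
    rw [hA, diagonal_smul]
    conv_lhs => rw [hH.spectral_theorem, Unitary.conjStarAlgAut_apply]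
    rw [Matrix.mul_smul, Matrix.smul_mul]
  have hAH : Aᴴ = A := by rw [hA]; simpa using congrArg (fun X => (2:ℂ) • X) hH
  have h3 : (RCLike.ofReal ∘ (fun x => 2 * |x|) ∘ hH.eigenvalues : m → ℂ)
      * (RCLike.ofReal ∘ (fun x => 2 * |x|) ∘ hH.eigenvalues)
      = ((2:ℂ) • (RCLike.ofReal ∘ hH.eigenvalues)) * ((2:ℂ) • (RCLike.ofReal ∘ hH.eigenvalues)) := by
    funext i
    simp only [Pi.mul_apply, Pi.smul_apply, Function.comp, smul_eq_mul]
    have hr : (2*|hH.eigenvalues i|)*(2*|hH.eigenvalues i|)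
        = 2 * hH.eigenvalues i * (2 * hH.eigenvalues i) := by
      have := abs_mul_abs_self (hH.eigenvalues i)
      linear_combination 4 * this
    rw [← RCLike.ofReal_mul, hr, RCLike.ofReal_mul, RCLike.ofReal_mul]
    norm_num
  rw [hsq, hAH, hAd, aux_prod, h3]

/-- `T(ρ₀,ρ₁) = Tr(Π₀ρ₀) − Tr(Π₀ρ₁)` for the Holevo–Helstrom
operator `Π₀ = I/2 + (1/2)·sgn((ρ₀−ρ₁)/2)`. -/
theorem traceDist_eq_holevoHelstrom
    {ρ₀ ρ₁ : Matrix m m ℂ} (h₀ : IsDensity ρ₀) (h₁ : IsDensity ρ₁)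
    (hH : ((2 : ℂ)⁻¹ • (ρ₀ - ρ₁)).IsHermitian) :
    (((2 : ℂ)⁻¹ • (1 + signMat hH) * ρ₀).trace
      - ((2 : ℂ)⁻¹ • (1 + signMat hH) * ρ₁).trace) = (traceDist ρ₀ ρ₁ : ℂ) := by
  set H := (2 : ℂ)⁻¹ • (ρ₀ - ρ₁) with hHdef
  have hA : ρ₀ - ρ₁ = (2 : ℂ) • H := by rw [hHdef, smul_smul]; norm_num
  have hRHS : traceDist ρ₀ ρ₁ = ∑ i, |hH.eigenvalues i| := by
    rw [traceDist, traceNorm, aux_sqrt hH hA, aux_trace_cfc]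
    rw [show (∑ i, ((2 * |hH.eigenvalues i| : ℝ) : ℂ)) = ((∑ i, 2 * |hH.eigenvalues i| : ℝ) : ℂ)
      by push_cast; ring]
    rw [Complex.ofReal_re, ← Finset.mul_sum]
    ring
  have hLHS : (((2 : ℂ)⁻¹ • (1 + signMat hH) * ρ₀).trace
      - ((2 : ℂ)⁻¹ • (1 + signMat hH) * ρ₁).trace) = (signMat hH * H).trace := by
    rw [← Matrix.trace_sub, ← Matrix.mul_sub, Matrix.smul_mul, Matrix.trace_smul, add_mul,
      one_mul, Matrix.trace_add, Matrix.trace_sub, h₀.2, h₁.2, sub_self, zero_add, hA,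
      Matrix.mul_smul, Matrix.trace_smul, smul_smul]
    norm_num
  rw [hLHS, aux_signMat_mul, aux_trace_cfc, hRHS]
  push_cast
  ring
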